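/- arXiv:0709.3346 — 3 statements merged into one kernel-verified Lean document; each statement's English description precedes it below -/
import Mathlib

section
/- For any complex numbers a and b and any real p ≥ 0, ∫₀^{2π} |a + b·e^{iβ}|^p dβ ≥ 2π · max(|a|^p, |b|^p). -/
/-!
The circle average of `log ‖a + b z‖` is `log (max ‖a‖ ‖b‖)` (Jensen's formula for a linear
polynomial), so Jensen's inequality for the convex function `exp` gives
`avg ‖a + b z‖ ^ p = avg exp (p log ‖a + b z‖) ≥ exp (p log (max ‖a‖ ‖b‖)) = max ‖a‖ ‖b‖ ^ p`.
-/

open Filter Metric Real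

open MeasureTheory in
theorem circleAverage_mono_codiscreteWithin {c : ℂ} {R : ℝ} {f₁ f₂ : ℂ → ℝ}
    (hf₁ : CircleIntegrable f₁ c R) (hf₂ : CircleIntegrable f₂ c R) (hR : R ≠ 0)
    (h : f₁ ≤ᶠ[codiscreteWithin (sphere c |R|)] f₂) :
    circleAverage f₁ c R ≤ circleAverage f₂ c R := by
  rw [circleAverage, circleAverage, smul_eq_mul, smul_eq_mul]
  gcongr
  refine intervalIntegral.integral_mono_ae_restrict two_pi_pos.le hf₁ hf₂ ?_
  apply ae_restrict_le_codiscreteWithin measurableSet_Icc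
  exact codiscreteWithin_mono (Set.subset_univ _) (circleMap_preimage_codiscrete hR h)

theorem exp_mul_circleAverage_log_le_circleAverage_rpow {f : ℂ → ℝ} {c : ℂ} {R : ℝ} (p : ℝ)
    (hR : R ≠ 0) (hf : ∀ᶠ z in codiscreteWithin (sphere c |R|), 0 < f z)
    (hlog : CircleIntegrable (fun z ↦ log (f z)) c R)
    (hrpow : CircleIntegrable (fun z ↦ f z ^ p) c R) :
    exp (p * circleAverage (fun z ↦ log (f z)) c R) ≤ circleAverage (fun z ↦ f z ^ p) c R := by
  set m := circleAverage (fun z ↦ log (f z)) c R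
  -- tangent line of `exp` at `p * m`, evaluated at `p * log (f z)`
  set tangent : ℂ → ℝ := fun z ↦ exp (p * m) * (1 - p * m) + (exp (p * m) * p) * log (f z)
  have h_tangent_le : tangent ≤ᶠ[codiscreteWithin (sphere c |R|)] fun z ↦ f z ^ p := by
    filter_upwards [hf] with z hz
    rw [rpow_def_of_pos hz]
    calc tangent z = exp (p * m) * (p * log (f z) - p * m + 1) := by ring
      _ ≤ exp (p * m) * exp (p * log (f z) - p * m) := by gcongr; exact add_one_le_exp _
      _ = exp (log (f z) * p) := by rw [← exp_add]; ring_nf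
  have h_avg_tangent : circleAverage tangent c R = exp (p * m) := by
    change circleAverage ((fun _ ↦ exp (p * m) * (1 - p * m)) +
      (exp (p * m) * p) • fun z ↦ log (f z)) c R = _
    rw [circleAverage_add (circleIntegrable_const _ c R) hlog.const_smul, circleAverage_const,
      circleAverage_smul, smul_eq_mul]
    ring
  calc exp (p * m) = circleAverage tangent c R := h_avg_tangent.symm
    _ ≤ _ := circleAverage_mono_codiscreteWithin
      ((circleIntegrable_const _ c R).add hlog.const_smul) hrpow hR h_tangent_le

theorem eventually_codiscreteWithin_add_mul_ne_zero {a b : ℂ} (hab : a ≠ 0 ∨ b ≠ 0) (S : Set ℂ) :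
    ∀ᶠ z in codiscreteWithin S, a + b * z ≠ 0 := by
  rcases eq_or_ne b 0 with rfl | hb
  · exact Eventually.of_forall fun _ ↦ by simpa using hab
  filter_upwards [compl_singleton_mem_codiscreteWithin (-(a / b))] with z hz
  contrapose! hz
  simp only [Set.mem_compl_iff, Set.mem_singleton_iff, not_not]
  field_simp
  linear_combination hz

theorem circleAverage_log_norm_add_mul (a b : ℂ) :
    circleAverage (fun z ↦ log ‖a + b * z‖) 0 1 = log (max ‖a‖ ‖b‖) := by
  rcases eq_or_ne b 0 with rfl | hb
  · simp [circleAverage_const]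
  have h_factor (z : ℂ) : a + b * z = b * (z + a / b) := by field_simp; ring
  calc circleAverage (fun z ↦ log ‖a + b * z‖) 0 1
      = circleAverage (fun z ↦ log ‖b‖ + log ‖z + a / b‖) 0 1 := by
        refine circleAverage_congr_codiscreteWithin ?_ one_ne_zero
        filter_upwards [eventually_codiscreteWithin_add_mul_ne_zero (Or.inr hb) _] with z hz
        rw [h_factor] at hz ⊢
        rw [norm_mul, log_mul (norm_ne_zero_iff.2 hb) (norm_ne_zero_iff.2 (right_ne_zero_of_mul hz))]
    _ = log ‖b‖ + log⁺ ‖a / b‖ := by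
        rw [circleAverage_fun_add (circleIntegrable_const _ _ _)
          (MeromorphicOn.circleIntegrable_log_norm fun z _ ↦ by fun_prop),
          circleAverage_const, circleAverage_log_norm_add_const_eq_posLog]
    _ = log (max ‖a‖ ‖b‖) := by
        rw [posLog_eq_log_max_one (norm_nonneg _), ← log_mul (norm_ne_zero_iff.2 hb) (by positivity),
          mul_max_of_nonneg _ _ (norm_nonneg _), norm_div, mul_div_cancel₀ _ (norm_ne_zero_iff.2 hb),
          mul_one, max_comm]

theorem intervalIntegral_comp_exp_I_mul_eq_two_pi_mul_circleAverage (f : ℂ → ℝ) :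
    ∫ β in (0:ℝ)..(2 * π), f (Complex.exp (Complex.I * β)) = 2 * π * circleAverage f 0 1 := by
  rw [circleAverage_def, smul_eq_mul, ← mul_assoc, mul_inv_cancel₀ two_pi_pos.ne', one_mul]
  simp [circleMap, mul_comm]

open Complex Real

theorem integral_abs_add_rpow_ge (a b : ℂ) (p : ℝ) (hp : 0 ≤ p) :
    (∫ β in (0:ℝ)..(2 * π), ‖a + b * Complex.exp (I * β)‖ ^ p)
      ≥ 2 * π * max (‖a‖ ^ p) (‖b‖ ^ p) := by
  by_cases h_zero : a = 0 ∧ b = 0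
  · obtain ⟨rfl, rfl⟩ := h_zero
    simp
  have hab : a ≠ 0 ∨ b ≠ 0 := by tauto
  have hM : 0 < max ‖a‖ ‖b‖ := lt_max_iff.2 (hab.imp norm_pos_iff.2 norm_pos_iff.2)
  rw [ge_iff_le, intervalIntegral_comp_exp_I_mul_eq_two_pi_mul_circleAverage
      (fun z ↦ ‖a + b * z‖ ^ p),
    ← (monotoneOn_rpow_Ici_of_exponent_nonneg hp).map_max (norm_nonneg a) (norm_nonneg b),
    rpow_def_of_pos hM, ← circleAverage_log_norm_add_mul, mul_comm _ p]
  gcongr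
  refine exp_mul_circleAverage_log_le_circleAverage_rpow p one_ne_zero ?_
    (MeromorphicOn.circleIntegrable_log_norm fun z _ ↦ by fun_prop)
    (ContinuousOn.circleIntegrable zero_le_one (by fun_prop))
  filter_upwards [eventually_codiscreteWithin_add_mul_ne_zero hab _] with z hz
  exact norm_pos_iff.2 hz
end

section
/- If P is a polynomial of degree n, Q(z) = z^n·conj(P(1/conj(z))), α a complex number, and p ≥ 1, then ∫₀^{2π}∫₀^{2π} |D_α Q(e^{iθ}) + e^{iβ} D_α P(e^{iθ})|^p dθ dβ ≤ 2π n^p (|α| + 1)^p ∫₀^{2π} |P(e^{iθ})|^p dθ. -/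
/-!
On the unit circle the conjugate reflection `Q` of `P` satisfies `n Q - z Q' = zⁿ conj (z P')`,
and symmetrically with `P` and `Q` exchanged. Hence
`D_α Q + e^{iβ} D_α P = zⁿ e^{iβ} conj (z (Q' + e^{iβ} P')) + α (Q' + e^{iβ} P')`,
which bounds the integrand by `(‖α‖ + 1)^p ‖Q' + e^{iβ} P'‖^p`.

The remaining double integral is the Aziz–Rahman inequality. Averaging over `β` only sees
`‖Q'(z)‖ = ‖n P(z) - z P'(z)‖`, which turns the integrand into `‖n P + (e^{iβ} - 1) z P'‖^p`.
For fixed `β` and `deg R ≤ n`, `n R + (e^{iβ} - 1) z R'` equals `n⁻¹ ∑ⱼ Wⱼ R(z ωⱼ)`, where `ωⱼ`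
runs over the `n`-th roots of `e^{iβ}` and the Fejér weights `Wⱼ = ‖∑_{m<n} ωⱼ^m‖²` sum to `n²`.
Jensen's inequality and rotation invariance of the integral then give the bound `n^p ∫ ‖P‖^p`.
-/

open Polynomial Complex Real Finset ComplexConjugate

lemma periodic_exp_I_mul : Function.Periodic (fun x : ℝ => exp (I * x)) (2 * π) := fun x => by
  simpa [mul_add, mul_comm] using exp_periodic (I * x)

lemma Function.Periodic.intervalIntegral_comp_add_right {E : Type*} [NormedAddCommGroup E]
    [NormedSpace ℝ E] {f : ℝ → E} {T : ℝ} (hf : Function.Periodic f T) (c : ℝ) :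
    ∫ x in (0 : ℝ)..T, f (x + c) = ∫ x in (0 : ℝ)..T, f x := by
  rw [intervalIntegral.integral_comp_add_right, zero_add, add_comm, hf.intervalIntegral_add_eq c 0,
    zero_add]

lemma intervalIntegral_intervalIntegral_swap_of_continuous {f : ℝ → ℝ → ℝ}
    (hf : Continuous (Function.uncurry f)) (a b c d : ℝ) :
    ∫ x in a..b, ∫ y in c..d, f x y = ∫ y in c..d, ∫ x in a..b, f x y :=
  MeasureTheory.intervalIntegral_intervalIntegral_swap
    ((hf.continuousOn.integrableOn_compact (isCompact_uIcc.prod isCompact_uIcc)).mono_set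
      (Set.prod_mono Set.uIoc_subset_uIcc Set.uIoc_subset_uIcc))

lemma intervalIntegral_intervalIntegral_mono {f g : ℝ → ℝ → ℝ} {a b : ℝ} (hab : a ≤ b)
    (c d : ℝ) (hf : Continuous (Function.uncurry f)) (hg : Continuous (Function.uncurry g))
    (h : ∀ x ∈ Set.Icc a b, ∫ y in c..d, f x y ≤ ∫ y in c..d, g x y) :
    ∫ x in a..b, ∫ y in c..d, f x y ≤ ∫ x in a..b, ∫ y in c..d, g x y :=
  intervalIntegral.integral_mono_on hab
    ((intervalIntegral.continuous_parametric_intervalIntegral_of_continuous' hf c d)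
      |>.intervalIntegrable _ _)
    ((intervalIntegral.continuous_parametric_intervalIntegral_of_continuous' hg c d)
      |>.intervalIntegrable _ _)
    h

lemma norm_add_exp_mul_eq (A B : ℂ) (β : ℝ) :
    ‖A + exp (I * β) * B‖ = ‖(‖A‖ : ℂ) + exp (I * ↑(β + (arg B - arg A))) * ‖B‖‖ := by
  have hA := norm_mul_exp_arg_mul_I A
  have hB := norm_mul_exp_arg_mul_I B
  have hrot : A + exp (I * β) * B =
      exp (arg A * I) * ((‖A‖ : ℂ) + exp (I * ↑(β + (arg B - arg A))) * ‖B‖) := by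
    have : exp (arg A * I) * exp (I * ↑(β + (arg B - arg A))) = exp (I * β) * exp (arg B * I) := by
      rw [← Complex.exp_add, ← Complex.exp_add]; push_cast; ring_nf
    linear_combination -hA - exp (I * β) * hB - (‖B‖ : ℂ) * this
  rw [hrot, norm_mul, norm_exp_ofReal_mul_I, one_mul]

lemma integral_rpow_norm_add_exp_mul_congr {A A' B B' : ℂ} (hA : ‖A‖ = ‖A'‖) (hB : ‖B‖ = ‖B'‖)
    (p : ℝ) :
    ∫ β in (0 : ℝ)..2 * π, ‖A + exp (I * β) * B‖ ^ p =
      ∫ β in (0 : ℝ)..2 * π, ‖A' + exp (I * β) * B'‖ ^ p := by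
  suffices key : ∀ A B : ℂ, ∫ β in (0 : ℝ)..2 * π, ‖A + exp (I * β) * B‖ ^ p =
      ∫ β in (0 : ℝ)..2 * π, ‖(‖A‖ : ℂ) + exp (I * β) * ‖B‖‖ ^ p by
    rw [key, key A' B', hA, hB]
  intro A B
  simp_rw [norm_add_exp_mul_eq A B]
  exact Function.Periodic.intervalIntegral_comp_add_right
    (f := fun β : ℝ => ‖(‖A‖ : ℂ) + exp (I * β) * ‖B‖‖ ^ p)
    (fun x => by simp only [periodic_exp_I_mul x]) _

lemma coeff_X_mul_derivative {R : Type*} [Semiring R] (f : R[X]) (i : ℕ) :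
    (X * derivative f).coeff i = f.coeff i * i := by
  cases i with
  | zero => simp
  | succ i => rw [coeff_X_mul, coeff_derivative]; push_cast; rfl

lemma natDegree_X_mul_derivative_le {R : Type*} [Semiring R] (f : R[X]) :
    (X * derivative f).natDegree ≤ f.natDegree :=
  natDegree_le_iff_coeff_eq_zero.mpr fun i hi => by
    rw [coeff_X_mul_derivative, coeff_eq_zero_of_natDegree_lt hi, zero_mul]

lemma C_mul_reflect_sub_X_mul_derivative {R : Type*} [CommRing R] {n : ℕ} {f : R[X]}
    (hf : f.natDegree ≤ n) :
    C (n : R) * reflect n f - X * derivative (reflect n f) = reflect n (X * derivative f) := by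
  ext i
  rw [coeff_sub, coeff_C_mul, coeff_X_mul_derivative, coeff_reflect, coeff_reflect,
    coeff_X_mul_derivative]
  by_cases hi : i ≤ n
  · rw [revAt_le hi, Nat.cast_sub hi]; ring
  · rw [revAt_eq_self_of_lt (not_le.mp hi), coeff_eq_zero_of_natDegree_lt (by omega)]; ring

noncomputable def conjReflect (n : ℕ) (P : ℂ[X]) : ℂ[X] :=
  reflect n (P.map (starRingEnd ℂ))

lemma eval_map_conj (P : ℂ[X]) (z : ℂ) :
    (P.map (starRingEnd ℂ)).eval z = conj (P.eval (conj z)) := by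
  simpa using eval_map_apply (p := P) (f := starRingEnd ℂ) (conj z)

lemma natDegree_conjReflect_le {n : ℕ} {P : ℂ[X]} (hP : P.natDegree ≤ n) :
    (conjReflect n P).natDegree ≤ n :=
  natDegree_reflect_le.trans (max_le le_rfl ((natDegree_map_le).trans hP))

lemma conjReflect_conjReflect (n : ℕ) (P : ℂ[X]) : conjReflect n (conjReflect n P) = P := by
  simp [conjReflect, reflect_map, Polynomial.map_map]

lemma eval_conjReflect {n : ℕ} {P : ℂ[X]} (hP : P.natDegree ≤ n) {z : ℂ} (hz : z ≠ 0) :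
    (conjReflect n P).eval z = z ^ n * conj (P.eval (conj z)⁻¹) := by
  have : Invertible z⁻¹ := invertibleOfNonzero (inv_ne_zero hz)
  have h := eval₂_reflect_mul_pow (RingHom.id ℂ) z⁻¹ n (P.map (starRingEnd ℂ))
    ((natDegree_map_le).trans hP)
  rw [invOf_eq_inv, inv_inv, ← eval, ← eval, eval_map_conj, map_inv₀] at h
  rw [conjReflect, ← h, inv_pow, mul_comm, inv_mul_cancel_right₀ (pow_ne_zero n hz)]

lemma eq_conjReflect_of_eval_eq {n : ℕ} {P Q : ℂ[X]} (hP : P.natDegree ≤ n)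
    (hQ : ∀ z : ℂ, z ≠ 0 → Q.eval z = z ^ n * conj (P.eval (conj z)⁻¹)) :
    Q = conjReflect n P := by
  refine eq_of_infinite_eval_eq _ _ ((Set.finite_singleton (0 : ℂ)).infinite_compl.mono ?_)
  intro z hz
  exact (hQ z hz).trans (eval_conjReflect hP hz).symm

lemma eval_conjReflect_of_norm_eq_one {n : ℕ} {P : ℂ[X]} (hP : P.natDegree ≤ n) {z : ℂ}
    (hz : ‖z‖ = 1) : (conjReflect n P).eval z = z ^ n * conj (P.eval z) := by
  rw [eval_conjReflect hP (norm_ne_zero_iff.mp (hz.trans_ne one_ne_zero)),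
    inv_eq_conj (by rwa [norm_conj]), conj_conj]

lemma natCast_mul_eval_conjReflect_sub_mul_eval_derivative {n : ℕ} {P : ℂ[X]}
    (hP : P.natDegree ≤ n) {z : ℂ} (hz : ‖z‖ = 1) :
    n * (conjReflect n P).eval z - z * (derivative (conjReflect n P)).eval z =
      z ^ n * conj (z * (derivative P).eval z) := by
  have h := congrArg (eval z)
    (C_mul_reflect_sub_X_mul_derivative ((natDegree_map_le (f := starRingEnd ℂ)).trans hP))
  have hXP := eval_conjReflect_of_norm_eq_one ((natDegree_X_mul_derivative_le P).trans hP) hz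
  rw [conjReflect, Polynomial.map_mul, Polynomial.map_X, ← derivative_map] at hXP
  rw [hXP, eval_sub, eval_mul, eval_mul, eval_C, eval_X] at h
  simpa only [conjReflect, eval_mul, eval_X] using h

noncomputable def polarDeriv (n : ℕ) (α : ℂ) (R : ℂ[X]) (z : ℂ) : ℂ :=
  n * R.eval z + (α - z) * (derivative R).eval z

lemma norm_polarDeriv_conjReflect_add_le {n : ℕ} {P : ℂ[X]} (hP : P.natDegree ≤ n) (α : ℂ)
    {z c : ℂ} (hz : ‖z‖ = 1) (hc : ‖c‖ = 1) :
    ‖polarDeriv n α (conjReflect n P) z + c * polarDeriv n α P z‖ ≤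
      (‖α‖ + 1) * ‖(derivative (conjReflect n P)).eval z + c * (derivative P).eval z‖ := by
  set Q := conjReflect n P
  have hQ := natCast_mul_eval_conjReflect_sub_mul_eval_derivative hP hz
  have hP' := natCast_mul_eval_conjReflect_sub_mul_eval_derivative (natDegree_conjReflect_le hP) hz
  rw [conjReflect_conjReflect] at hP'
  have hcc : c * conj c = 1 := by rw [mul_conj', hc]; simp
  set S := (derivative Q).eval z + c * (derivative P).eval z
  have key : polarDeriv n α Q z + c * polarDeriv n α P z = z ^ n * c * conj (z * S) + α * S := by
    simp only [polarDeriv, S, map_mul, map_add] at hQ hP' ⊢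
    linear_combination hQ + c * hP' - z ^ n * conj z * conj ((derivative P).eval z) * hcc
  calc _ = ‖z ^ n * c * conj (z * S) + α * S‖ := by rw [key]
    _ ≤ ‖S‖ + ‖α‖ * ‖S‖ := by
      refine (norm_add_le _ _).trans_eq ?_
      simp [hz, hc]
    _ = (‖α‖ + 1) * ‖S‖ := by ring

lemma IsPrimitiveRoot.geom_sum_zpow {K : Type*} [Field K] {ζ : K} {n : ℕ}
    (hζ : IsPrimitiveRoot ζ n) (d : ℤ) :
    ∑ j ∈ range n, (ζ ^ d) ^ j = if (n : ℤ) ∣ d then (n : K) else 0 := by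
  split_ifs with hd
  · simp [(hζ.zpow_eq_one_iff_dvd d).mpr hd]
  · have hne : ζ ^ d ≠ 1 := mt (hζ.zpow_eq_one_iff_dvd d).mp hd
    have hpow : (ζ ^ d) ^ n = 1 := by
      rw [← zpow_natCast, ← zpow_mul, mul_comm, zpow_mul, zpow_natCast, hζ.pow_eq_one, one_zpow]
    rw [geom_sum_eq hne, hpow, sub_self, zero_div]

lemma sum_pow_mul_conj_pow_eq_ite {n : ℕ} {ζ c : ℂ} (hζ : IsPrimitiveRoot ζ n) (hc : ‖c‖ = 1)
    {i l : ℕ} (hi : i < n) (hl : l < n) :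
    ∑ j ∈ range n, (c * ζ ^ j) ^ i * conj ((c * ζ ^ j) ^ l) = if i = l then (n : ℂ) else 0 := by
  have hn : n ≠ 0 := by omega
  have hζ1 : ‖ζ‖ = 1 := hζ.norm'_eq_one hn
  have hc0 : c ≠ 0 := norm_ne_zero_iff.mp (by rw [hc]; exact one_ne_zero)
  have hζ0 : ζ ≠ 0 := hζ.ne_zero hn
  have hterm : ∀ j : ℕ, (c * ζ ^ j) ^ i * conj ((c * ζ ^ j) ^ l) =
      c ^ ((i : ℤ) - l) * (ζ ^ ((i : ℤ) - l)) ^ j := by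
    intro j
    have hw : ‖c * ζ ^ j‖ = 1 := by simp [hc, hζ1]
    rw [← inv_eq_conj (by rw [norm_pow, hw, one_pow]), ← div_eq_mul_inv, ← zpow_natCast,
      ← zpow_natCast _ l, ← zpow_sub₀ (mul_ne_zero hc0 (pow_ne_zero j hζ0)), mul_zpow,
      ← zpow_natCast ζ j, ← zpow_mul, mul_comm (j : ℤ), zpow_mul, zpow_natCast]
  rw [sum_congr rfl fun j _ => hterm j, ← mul_sum, hζ.geom_sum_zpow]
  have hdvd : (n : ℤ) ∣ (i : ℤ) - l ↔ i = l := by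
    refine ⟨fun h => ?_, fun h => by simp [h]⟩
    have := Int.eq_zero_of_abs_lt_dvd h (by rw [abs_lt]; omega)
    omega
  by_cases h : i = l
  · simp [h]
  · simp [h, hdvd]

lemma pow_mul_geom_sum_eq {R : Type*} [CommSemiring R] {ω a : R} {n k : ℕ} (hω : ω ^ n = a)
    (hk : k ≤ n) :
    ω ^ k * ∑ m ∈ range n, ω ^ m = ∑ i ∈ Ico k n, ω ^ i + a * ∑ i ∈ range k, ω ^ i := by
  rw [mul_sum, sum_Ico_eq_sum_range, mul_sum, ← Nat.sub_add_cancel hk, sum_range_add,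
    Nat.sub_add_cancel hk]
  congr 1
  · exact sum_congr rfl fun m _ => by ring
  · refine sum_congr rfl fun m _ => ?_
    rw [← hω, ← pow_add, ← pow_add]
    congr 1
    omega

/-- `n` times the Fejér kernel at the point `ω` of the unit circle. -/
noncomputable def fejerWeight (n : ℕ) (ω : ℂ) : ℝ :=
  ‖∑ m ∈ range n, ω ^ m‖ ^ 2

lemma fejerWeight_nonneg (n : ℕ) (ω : ℂ) : 0 ≤ fejerWeight n ω :=
  sq_nonneg _

lemma sum_conj_geom_sum_mul_pow {n : ℕ} {ζ c : ℂ} (hζ : IsPrimitiveRoot ζ n) (hc : ‖c‖ = 1)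
    {i : ℕ} (hi : i < n) :
    ∑ j ∈ range n, conj (∑ m ∈ range n, (c * ζ ^ j) ^ m) * (c * ζ ^ j) ^ i = n := by
  calc _ = ∑ m ∈ range n, ∑ j ∈ range n, (c * ζ ^ j) ^ i * conj ((c * ζ ^ j) ^ m) := by
        simp_rw [map_sum, sum_mul]
        rw [sum_comm]
        exact sum_congr rfl fun m _ => sum_congr rfl fun j _ => mul_comm _ _
    _ = ∑ m ∈ range n, if i = m then (n : ℂ) else 0 :=
        sum_congr rfl fun m hm => sum_pow_mul_conj_pow_eq_ite hζ hc hi (mem_range.mp hm)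
    _ = n := by rw [sum_ite_eq, if_pos (mem_range.mpr hi)]

lemma sum_fejerWeight_mul_pow {n : ℕ} {ζ c : ℂ} (hζ : IsPrimitiveRoot ζ n) (hc : ‖c‖ = 1)
    {k : ℕ} (hk : k ≤ n) :
    ∑ j ∈ range n, (fejerWeight n (c * ζ ^ j) : ℂ) * (c * ζ ^ j) ^ k =
      n * ((n - k) + k * c ^ n) := by
  have hnode : ∀ j, (c * ζ ^ j) ^ n = c ^ n := fun j => by
    rw [mul_pow, ← pow_mul, mul_comm j, pow_mul, hζ.pow_eq_one, one_pow, mul_one]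
  calc _ = ∑ j ∈ range n, conj (∑ m ∈ range n, (c * ζ ^ j) ^ m) *
        (∑ i ∈ Ico k n, (c * ζ ^ j) ^ i + c ^ n * ∑ i ∈ range k, (c * ζ ^ j) ^ i) := by
        refine sum_congr rfl fun j _ => ?_
        rw [fejerWeight, ← pow_mul_geom_sum_eq (hnode j) hk, ofReal_pow, ← mul_conj']
        ring
    _ = ∑ i ∈ Ico k n, (n : ℂ) + c ^ n * ∑ i ∈ range k, (n : ℂ) := by
        rw [← sum_congr rfl fun i hi => sum_conj_geom_sum_mul_pow hζ hc (mem_Ico.mp hi).2,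
          ← sum_congr rfl fun i hi =>
            sum_conj_geom_sum_mul_pow hζ hc ((mem_range.mp hi).trans_le hk)]
        simp only [mul_add, sum_add_distrib, mul_sum, mul_left_comm _ (c ^ n)]
        congr 1 <;> exact sum_comm
    _ = n * ((n - k) + k * c ^ n) := by
        simp only [sum_const, Nat.card_Ico, card_range, nsmul_eq_mul, Nat.cast_sub hk]
        ring

lemma sum_fejerWeight_mul_eval {n : ℕ} {ζ c : ℂ} (hζ : IsPrimitiveRoot ζ n) (hc : ‖c‖ = 1)
    {R : ℂ[X]} (hR : R.natDegree ≤ n) (z : ℂ) :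
    ∑ j ∈ range n, (fejerWeight n (c * ζ ^ j) : ℂ) * R.eval (z * (c * ζ ^ j)) =
      n * (n * R.eval z + (c ^ n - 1) * (z * (derivative R).eval z)) := by
  have hlt : R.natDegree < n + 1 := Nat.lt_succ_of_le hR
  have hXR : z * (derivative R).eval z = ∑ k ∈ range (n + 1), R.coeff k * k * z ^ k := by
    have := eval_eq_sum_range' ((natDegree_X_mul_derivative_le R).trans_lt hlt) z
    simpa only [eval_mul, eval_X, coeff_X_mul_derivative] using this
  calc _ = ∑ k ∈ range (n + 1), R.coeff k * z ^ k *
        ∑ j ∈ range n, (fejerWeight n (c * ζ ^ j) : ℂ) * (c * ζ ^ j) ^ k := by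
        simp_rw [eval_eq_sum_range' hlt, mul_sum]
        rw [sum_comm]
        exact sum_congr rfl fun k _ => sum_congr rfl fun j _ => by ring
    _ = ∑ k ∈ range (n + 1), R.coeff k * z ^ k * (n * ((n - k) + k * c ^ n)) :=
        sum_congr rfl fun k hk => by
          rw [sum_fejerWeight_mul_pow hζ hc (Nat.lt_succ_iff.mp (mem_range.mp hk))]
    _ = _ := by
        rw [hXR, eval_eq_sum_range' hlt, mul_sum, mul_sum, ← sum_add_distrib, mul_sum]
        exact sum_congr rfl fun k _ => by ring

lemma integral_rpow_le_of_le_sum_translates {ι : Type*} (s : Finset ι) {w t : ι → ℝ}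
    (hw : ∀ i ∈ s, 0 ≤ w i) (hw1 : ∑ i ∈ s, w i = 1) {f g : ℝ → ℝ} {T : ℝ} (hT : 0 ≤ T)
    (hf : Continuous f) (hf0 : ∀ x, 0 ≤ f x) (hg : Continuous g) (hg0 : ∀ x, 0 ≤ g x)
    (hgT : Function.Periodic g T) (hfg : ∀ x, f x ≤ ∑ i ∈ s, w i * g (x + t i))
    {p : ℝ} (hp : 1 ≤ p) :
    ∫ x in (0 : ℝ)..T, f x ^ p ≤ ∫ x in (0 : ℝ)..T, g x ^ p := by
  have hp0 : 0 ≤ p := zero_le_one.trans hp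
  have hcont : ∀ i, Continuous fun x => w i * g (x + t i) ^ p := fun i => by
    fun_prop (disch := exact Or.inr hp0)
  calc ∫ x in (0 : ℝ)..T, f x ^ p ≤ ∫ x in (0 : ℝ)..T, ∑ i ∈ s, w i * g (x + t i) ^ p := by
        refine intervalIntegral.integral_mono_on hT ?_ ?_ fun x _ => ?_
        · exact (hf.rpow_const fun _ => Or.inr hp0).intervalIntegrable _ _
        · exact (continuous_finsetSum _ fun i _ => hcont i).intervalIntegrable _ _
        · exact (rpow_le_rpow (hf0 x) (hfg x) hp0).trans
            (rpow_arith_mean_le_arith_mean_rpow s w _ hw hw1 (fun i _ => hg0 _) hp)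
    _ = ∑ i ∈ s, w i * ∫ x in (0 : ℝ)..T, g x ^ p := by
        rw [intervalIntegral.integral_finsetSum fun i _ => (hcont i).intervalIntegrable _ _]
        refine sum_congr rfl fun i _ => ?_
        rw [intervalIntegral.integral_const_mul,
          (hgT.comp fun y => y ^ p).intervalIntegral_comp_add_right (f := fun x => g x ^ p)]
    _ = ∫ x in (0 : ℝ)..T, g x ^ p := by rw [← sum_mul, hw1, one_mul]

theorem integral_rpow_norm_natCast_mul_add_mul_derivative_le (n : ℕ) {R : ℂ[X]}
    (hR : R.natDegree ≤ n) (β : ℝ) {p : ℝ} (hp : 1 ≤ p) :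
    ∫ θ in (0 : ℝ)..2 * π, ‖n * R.eval (exp (I * θ)) +
        (exp (I * β) - 1) * (exp (I * θ) * (derivative R).eval (exp (I * θ)))‖ ^ p ≤
      n ^ p * ∫ θ in (0 : ℝ)..2 * π, ‖R.eval (exp (I * θ))‖ ^ p := by
  have hp0 : 0 ≤ p := zero_le_one.trans hp
  rcases Nat.eq_zero_or_pos n with rfl | hn
  · simp [derivative_of_natDegree_zero (Nat.le_zero.mp hR), zero_rpow (by positivity : p ≠ 0)]
  have hn0 : (0 : ℝ) < n := Nat.cast_pos.mpr hn
  have hnC : (n : ℂ) ≠ 0 := Nat.cast_ne_zero.mpr hn.ne'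
  set ζ := exp (2 * π * I / n)
  set c := exp (I * ↑(β / n))
  set t : ℕ → ℝ := fun j => (β + 2 * π * j) / n
  have hζ : IsPrimitiveRoot ζ n := isPrimitiveRoot_exp n hn.ne'
  have hc : ‖c‖ = 1 := norm_exp_I_mul_ofReal _
  have hcn : c ^ n = exp (I * β) := by
    rw [← Complex.exp_nat_mul]; congr 1; push_cast; field_simp
  have hnode : ∀ θ : ℝ, ∀ j, exp (I * θ) * (c * ζ ^ j) = exp (I * ↑(θ + t j)) := fun θ j => by
    simp only [c, ζ, t]
    rw [← Complex.exp_nat_mul, ← Complex.exp_add, ← Complex.exp_add]; congr 1; push_cast; field_simp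
  set W : ℕ → ℝ := fun j => fejerWeight n (c * ζ ^ j)
  have hW : ∑ j ∈ range n, W j = n ^ 2 := by
    have h := sum_fejerWeight_mul_pow hζ hc (Nat.zero_le n)
    simp only [pow_zero, mul_one, Nat.cast_zero, sub_zero, zero_mul, add_zero] at h
    exact_mod_cast h.trans (sq _).symm
  refine integral_rpow_le_of_le_sum_translates (range n) (w := fun j => W j / n ^ 2) (t := t)
    (g := fun θ => n * ‖R.eval (exp (I * θ))‖)
    (fun j _ => div_nonneg (fejerWeight_nonneg _ _) (sq_nonneg _))
    (by rw [← sum_div, hW, div_self (by positivity)]) (by positivity) (by fun_prop)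
    (fun _ => norm_nonneg _) (by fun_prop) (fun _ => by positivity)
    (fun θ => by simp only [periodic_exp_I_mul θ]) (fun θ => ?_) hp |>.trans_eq ?_
  · have havg := sum_fejerWeight_mul_eval hζ hc hR (exp (I * θ))
    simp only [hcn, hnode] at havg
    have hsum : ∑ j ∈ range n, W j / n ^ 2 * (n * ‖R.eval (exp (I * ↑(θ + t j)))‖) =
        (∑ j ∈ range n, W j * ‖R.eval (exp (I * ↑(θ + t j)))‖) / n := by
      rw [sum_div]
      exact sum_congr rfl fun j _ => by field_simp
    rw [hsum, le_div_iff₀' hn0]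
    have htri := norm_sum_le (range n) fun j => (W j : ℂ) * R.eval (exp (I * ↑(θ + t j)))
    rw [havg, norm_mul, Complex.norm_natCast] at htri
    refine htri.trans_eq (sum_congr rfl fun j _ => ?_)
    rw [norm_mul, norm_real, norm_of_nonneg (fejerWeight_nonneg _ _)]
  · simp_rw [mul_rpow hn0.le (norm_nonneg _)]
    exact intervalIntegral.integral_const_mul _ _

/-- The Aziz–Rahman inequality. -/
theorem integral_integral_rpow_norm_derivative_conjReflect_add_le (n : ℕ) {P : ℂ[X]}
    (hP : P.natDegree ≤ n) {p : ℝ} (hp : 1 ≤ p) :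
    ∫ β in (0 : ℝ)..2 * π, ∫ θ in (0 : ℝ)..2 * π,
        ‖(derivative (conjReflect n P)).eval (exp (I * θ)) +
          exp (I * β) * (derivative P).eval (exp (I * θ))‖ ^ p ≤
      2 * π * n ^ p * ∫ θ in (0 : ℝ)..2 * π, ‖P.eval (exp (I * θ))‖ ^ p := by
  have hp0 : 0 ≤ p := zero_le_one.trans hp
  have hphase : ∀ θ : ℝ,
      ∫ β in (0 : ℝ)..2 * π, ‖(derivative (conjReflect n P)).eval (exp (I * θ)) +
          exp (I * β) * (derivative P).eval (exp (I * θ))‖ ^ p =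
        ∫ β in (0 : ℝ)..2 * π, ‖n * P.eval (exp (I * θ)) +
          (exp (I * β) - 1) * (exp (I * θ) * (derivative P).eval (exp (I * θ)))‖ ^ p := fun θ => by
    have hz := norm_exp_I_mul_ofReal θ
    have hrefl :=
      natCast_mul_eval_conjReflect_sub_mul_eval_derivative (natDegree_conjReflect_le hP) hz
    rw [conjReflect_conjReflect] at hrefl
    have hA : ‖(derivative (conjReflect n P)).eval (exp (I * θ))‖ =
        ‖n * P.eval (exp (I * θ)) - exp (I * θ) * (derivative P).eval (exp (I * θ))‖ := by
      rw [hrefl, norm_mul, norm_pow, norm_conj, norm_mul, hz, one_pow, one_mul, one_mul]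
    have hB : ‖(derivative P).eval (exp (I * θ))‖ =
        ‖exp (I * θ) * (derivative P).eval (exp (I * θ))‖ := by
      rw [norm_mul, hz, one_mul]
    rw [integral_rpow_norm_add_exp_mul_congr hA hB]
    congr! 4
    ring
  calc _ = ∫ θ in (0 : ℝ)..2 * π, ∫ β in (0 : ℝ)..2 * π,
        ‖(derivative (conjReflect n P)).eval (exp (I * θ)) +
          exp (I * β) * (derivative P).eval (exp (I * θ))‖ ^ p :=
        intervalIntegral_intervalIntegral_swap_of_continuous
          (by fun_prop (disch := exact fun _ => Or.inr hp0)) _ _ _ _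
    _ = ∫ β in (0 : ℝ)..2 * π, ∫ θ in (0 : ℝ)..2 * π, ‖n * P.eval (exp (I * θ)) +
          (exp (I * β) - 1) * (exp (I * θ) * (derivative P).eval (exp (I * θ)))‖ ^ p := by
        rw [intervalIntegral.integral_congr fun θ _ => hphase θ,
          intervalIntegral_intervalIntegral_swap_of_continuous
            (by fun_prop (disch := exact fun _ => Or.inr hp0))]
    _ ≤ ∫ β in (0 : ℝ)..2 * π, ∫ θ in (0 : ℝ)..2 * π, n ^ p * ‖P.eval (exp (I * θ))‖ ^ p :=
        intervalIntegral_intervalIntegral_mono (by positivity) _ _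
          (by fun_prop (disch := exact fun _ => Or.inr hp0))
          (by fun_prop (disch := exact fun _ => Or.inr hp0)) fun β _ => by
          rw [intervalIntegral.integral_const_mul]
          exact integral_rpow_norm_natCast_mul_add_mul_derivative_le n hP β hp
    _ = _ := by
        rw [intervalIntegral.integral_const, intervalIntegral.integral_const_mul]
        simp only [sub_zero, smul_eq_mul]
        ring

theorem lemma3_double_integral_general (n : ℕ) (P Q : Polynomial ℂ)
    (hP : P.natDegree = n)
    (hQ : ∀ z : ℂ, z ≠ 0 →
      Q.eval z = z ^ n * (starRingEnd ℂ) (P.eval ((starRingEnd ℂ) z)⁻¹))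
    (α : ℂ) (p : ℝ) (hp : 1 ≤ p) :
    (∫ β in (0:ℝ)..(2 * π), ∫ θ in (0:ℝ)..(2 * π),
        (‖
          (((n : ℂ) * Q.eval (Complex.exp (I * θ)) +
              (α - Complex.exp (I * θ)) * (derivative Q).eval (Complex.exp (I * θ))) +
            Complex.exp (I * β) *
              ((n : ℂ) * P.eval (Complex.exp (I * θ)) +
                (α - Complex.exp (I * θ)) * (derivative P).eval (Complex.exp (I * θ))))‖) ^ p)
      ≤ 2 * π * (n : ℝ) ^ p * (‖α‖ + 1) ^ p *
          ∫ θ in (0:ℝ)..(2 * π), (‖P.eval (Complex.exp (I * θ))‖) ^ p := by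
  obtain rfl := eq_conjReflect_of_eval_eq hP.le hQ
  have hp0 : 0 ≤ p := zero_le_one.trans hp
  calc _ ≤ ∫ β in (0 : ℝ)..2 * π, ∫ θ in (0 : ℝ)..2 * π, (‖α‖ + 1) ^ p *
        ‖(derivative (conjReflect n P)).eval (exp (I * θ)) +
          exp (I * β) * (derivative P).eval (exp (I * θ))‖ ^ p := by
        refine intervalIntegral_intervalIntegral_mono (by positivity) _ _
          (by fun_prop (disch := exact fun _ => Or.inr hp0))
          (by fun_prop (disch := exact fun _ => Or.inr hp0)) fun β _ =>
          intervalIntegral.integral_mono_on (by positivity)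
            (Continuous.intervalIntegrable (by fun_prop (disch := exact fun _ => Or.inr hp0)) _ _)
            (Continuous.intervalIntegrable (by fun_prop (disch := exact fun _ => Or.inr hp0)) _ _)
            fun θ _ => ?_
        rw [← mul_rpow (by positivity) (norm_nonneg _)]
        exact rpow_le_rpow (norm_nonneg _) (norm_polarDeriv_conjReflect_add_le hP.le α
          (norm_exp_I_mul_ofReal θ) (norm_exp_I_mul_ofReal β)) hp0
    _ = (‖α‖ + 1) ^ p * ∫ β in (0 : ℝ)..2 * π, ∫ θ in (0 : ℝ)..2 * π,
        ‖(derivative (conjReflect n P)).eval (exp (I * θ)) +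
          exp (I * β) * (derivative P).eval (exp (I * θ))‖ ^ p := by
        simp_rw [intervalIntegral.integral_const_mul]
    _ ≤ (‖α‖ + 1) ^ p * (2 * π * n ^ p * ∫ θ in (0 : ℝ)..2 * π, ‖P.eval (exp (I * θ))‖ ^ p) :=
        mul_le_mul_of_nonneg_left
          (integral_integral_rpow_norm_derivative_conjReflect_add_le n hP.le hp) (by positivity)
    _ = _ := by ring

theorem lemma3_double_integral (n : ℕ) (hn : 1 ≤ n) (P Q : Polynomial ℂ)
    (hP : P.natDegree = n) (hP0 : P.eval 0 ≠ 0)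
    (hQ : ∀ z : ℂ, z ≠ 0 →
      Q.eval z = z ^ n * (starRingEnd ℂ) (P.eval ((starRingEnd ℂ) z)⁻¹))
    (α : ℂ) (p : ℝ) (hp : 1 ≤ p) :
    (∫ β in (0:ℝ)..(2 * π), ∫ θ in (0:ℝ)..(2 * π),
        (‖
          (((n : ℂ) * Q.eval (Complex.exp (I * θ)) +
              (α - Complex.exp (I * θ)) * (derivative Q).eval (Complex.exp (I * θ))) +
            Complex.exp (I * β) *
              ((n : ℂ) * P.eval (Complex.exp (I * θ)) +
                (α - Complex.exp (I * θ)) * (derivative P).eval (Complex.exp (I * θ))))‖) ^ p)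
      ≤ 2 * π * (n : ℝ) ^ p * (‖α‖ + 1) ^ p *
          ∫ θ in (0:ℝ)..(2 * π), (‖P.eval (Complex.exp (I * θ))‖) ^ p :=
  lemma3_double_integral_general n P Q hP hQ α p hp
end

section
/- If P is a polynomial of degree n, then for every complex number α and every p ≥ 1, (∫₀^{2π} |D_α P(e^{iθ})|^p dθ)^{1/p} ≤ n(|α| + 1)(∫₀^{2π} |P(e^{iθ})|^p dθ)^{1/p}. -/
/-!
Write `z = e^{iθ}`. Then `D_α P(z) = (n P(z) - z P'(z)) + α P'(z)`, and both summands are, up to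
unimodular factors, derivatives of trigonometric polynomials of degree at most `n`:
`d/dθ P(e^{iθ}) = i z P'(z)` and `d/dθ (e^{-inθ} P(e^{iθ})) = -i e^{-inθ} (n P(z) - z P'(z))`.
Bernstein's inequality `‖T'‖_p ≤ n ‖T‖_p` applied to both, together with Minkowski's inequality,
gives the bound `n (|α| + 1) ‖P‖_p`.

Bernstein's inequality follows from M. Riesz's interpolation formula
`T'(θ) = ∑_{k < 2n} A_k T(θ + x_k)` with `x_k = (2k+1)π/(2n)` and
`A_k = (-1)^k / (4n sin²(x_k/2))`: since `∑ |A_k| = n` and the `L^p` norm of a periodic function is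
translation invariant, Minkowski's inequality gives `‖T'‖_p ≤ n ‖T‖_p`. Writing
`A_k = i u_k^{n+1} / (n (u_k - 1)²)` with `u_k = e^{i x_k}` the roots of `u^{2n} = -1`, the formula
reduces to power sums of these roots.
-/

open Polynomial Complex Real MeasureTheory Finset

noncomputable def circleLpNorm (p : ℝ) (F : ℝ → ℂ) : ℝ :=
  (∫ θ in (0:ℝ)..(2 * π), ‖F θ‖ ^ p) ^ (1 / p)

section circleLpNorm

variable {p : ℝ} {F G : ℝ → ℂ}

theorem circleLpNorm_nonneg (p : ℝ) (F : ℝ → ℂ) : 0 ≤ circleLpNorm p F :=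
  Real.rpow_nonneg (intervalIntegral.integral_nonneg (by positivity) fun _ _ => by positivity) _

theorem circleLpNorm_congr_norm (h : ∀ θ, ‖F θ‖ = ‖G θ‖) : circleLpNorm p F = circleLpNorm p G := by
  simp only [circleLpNorm, h]

theorem circleLpNorm_zero (hp : p ≠ 0) : circleLpNorm p 0 = 0 := by
  simp [circleLpNorm, Real.zero_rpow hp, Real.zero_rpow (inv_ne_zero hp)]

theorem circleLpNorm_const_mul (hp : p ≠ 0) (c : ℂ) (F : ℝ → ℂ) :
    circleLpNorm p (fun θ => c * F θ) = ‖c‖ * circleLpNorm p F := by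
  simp only [circleLpNorm, norm_mul, Real.mul_rpow (norm_nonneg c) (norm_nonneg _),
    intervalIntegral.integral_const_mul]
  rw [Real.mul_rpow (by positivity)
      (intervalIntegral.integral_nonneg (by positivity) fun _ _ => by positivity),
    ← Real.rpow_mul (norm_nonneg c), mul_one_div_cancel hp, Real.rpow_one]

theorem circleLpNorm_comp_add_right (hF : Function.Periodic F (2 * π)) (a : ℝ) :
    circleLpNorm p (fun θ => F (θ + a)) = circleLpNorm p F := by
  have hper : Function.Periodic (fun θ => ‖F θ‖ ^ p) (2 * π) := fun θ => by simp only [hF θ]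
  simp only [circleLpNorm, intervalIntegral.integral_comp_add_right (fun θ => ‖F θ‖ ^ p) a]
  rw [zero_add, add_comm _ a, hper.intervalIntegral_add_eq a 0, zero_add]

theorem ofReal_circleLpNorm (hF : Continuous F) (hp : 0 < p) :
    ENNReal.ofReal (circleLpNorm p F)
      = eLpNorm F (ENNReal.ofReal p) (volume.restrict (Set.Ioc 0 (2 * π))) := by
  obtain ⟨C, hC⟩ := (isCompact_Icc (a := 0) (b := 2 * π)).exists_bound_of_continuousOn
    hF.continuousOn
  have hF_memLp : MemLp F (ENNReal.ofReal p) (volume.restrict (Set.Ioc 0 (2 * π))) := by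
    refine MemLp.of_bound hF.aestronglyMeasurable C ?_
    filter_upwards [ae_restrict_mem measurableSet_Ioc] with θ hθ
    exact hC θ (Set.Ioc_subset_Icc_self hθ)
  rw [hF_memLp.eLpNorm_eq_integral_rpow_norm (by simpa using hp) ENNReal.ofReal_ne_top,
    ENNReal.toReal_ofReal hp.le, circleLpNorm, intervalIntegral.integral_of_le (by positivity),
    one_div]

theorem circleLpNorm_add_le (hF : Continuous F) (hG : Continuous G) (hp : 1 ≤ p) :
    circleLpNorm p (F + G) ≤ circleLpNorm p F + circleLpNorm p G := by
  have hp0 : 0 < p := by linarith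
  rw [← ENNReal.ofReal_le_ofReal_iff
      (add_nonneg (circleLpNorm_nonneg p F) (circleLpNorm_nonneg p G)),
    ENNReal.ofReal_add (circleLpNorm_nonneg p F) (circleLpNorm_nonneg p G),
    ofReal_circleLpNorm (hF.add hG) hp0, ofReal_circleLpNorm hF hp0, ofReal_circleLpNorm hG hp0]
  exact eLpNorm_add_le hF.aestronglyMeasurable hG.aestronglyMeasurable (by simpa using hp)

theorem circleLpNorm_sum_le {ι : Type*} (s : Finset ι) {F : ι → ℝ → ℂ}
    (hF : ∀ i ∈ s, Continuous (F i)) (hp : 1 ≤ p) :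
    circleLpNorm p (∑ i ∈ s, F i) ≤ ∑ i ∈ s, circleLpNorm p (F i) := by
  have hp0 : 0 < p := by linarith
  have hsum_nonneg : 0 ≤ ∑ i ∈ s, circleLpNorm p (F i) :=
    sum_nonneg fun i _ => circleLpNorm_nonneg p (F i)
  rw [← ENNReal.ofReal_le_ofReal_iff hsum_nonneg,
    ENNReal.ofReal_sum_of_nonneg fun i _ => circleLpNorm_nonneg p (F i),
    ofReal_circleLpNorm (by rw [sum_fn]; exact continuous_finsetSum s hF) hp0,
    sum_congr rfl fun i hi => ofReal_circleLpNorm (hF i hi) hp0]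
  exact eLpNorm_sum_le (fun i hi => (hF i hi).aestronglyMeasurable) (by simpa using hp)

end circleLpNorm

noncomputable def trigPoly {ι : Type*} (s : Finset ι) (c : ι → ℂ) (ω : ι → ℤ) (θ : ℝ) : ℂ :=
  ∑ i ∈ s, c i * cexp (ω i * θ * I)

section trigPoly

variable {ι : Type*} (s : Finset ι) (c : ι → ℂ) (ω : ι → ℤ)

theorem hasDerivAt_trigPoly (θ : ℝ) :
    HasDerivAt (trigPoly s c ω) (∑ i ∈ s, c i * (ω i * I) * cexp (ω i * θ * I)) θ := by
  unfold trigPoly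
  refine HasDerivAt.fun_sum fun i _ => ?_
  have h := (((hasDerivAt_id θ).ofReal_comp.const_mul (ω i : ℂ)).mul_const I).cexp
  simpa [mul_comm, mul_left_comm, mul_assoc] using h.const_mul (c i)

theorem continuous_trigPoly : Continuous (trigPoly s c ω) := by
  unfold trigPoly
  fun_prop

theorem periodic_trigPoly : Function.Periodic (trigPoly s c ω) (2 * π) := by
  intro θ
  refine sum_congr rfl fun i _ => ?_
  rw [show (ω i : ℂ) * ↑(θ + 2 * π) * I = ω i * θ * I + ω i * (2 * π * I) by push_cast; ring,
    Complex.exp_add, exp_int_mul_two_pi_mul_I, mul_one]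

end trigPoly

theorem four_mul_sin_half_sq_mul_exp (z : ℂ) :
    4 * Complex.sin (z / 2) ^ 2 * cexp (z * I) = -(cexp (z * I) - 1) ^ 2 := by
  have hsq : cexp (z * I) = cexp (z / 2 * I) ^ 2 := by rw [← Complex.exp_nat_mul]; ring_nf
  have hne := exp_ne_zero (z / 2 * I)
  rw [Complex.sin, hsq, show -(z / 2) * I = -(z / 2 * I) by ring, Complex.exp_neg]
  field_simp
  ring_nf
  rw [I_sq]
  ring

namespace RieszInterpolation

variable (n : ℕ)

noncomputable def node (k : ℕ) : ℝ := (2 * k + 1) * π / (2 * n)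

noncomputable def weight (k : ℕ) : ℝ := (-1) ^ k / (4 * n * Real.sin (node n k / 2) ^ 2)

noncomputable def nodeExp (k : ℕ) : ℂ := cexp (node n k * I)

theorem nodeExp_eq_pow (k : ℕ) : nodeExp n k = nodeExp n 0 ^ (2 * k + 1) := by
  rw [nodeExp, nodeExp, ← Complex.exp_nat_mul, node, node]
  push_cast
  ring_nf

variable {n}

theorem nodeExp_zero_pow (hn : 0 < n) : nodeExp n 0 ^ n = I := by
  have hn' : (n : ℂ) ≠ 0 := by exact_mod_cast hn.ne'
  rw [nodeExp, ← Complex.exp_nat_mul, node]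
  convert exp_pi_div_two_mul_I using 2
  push_cast
  field_simp
  norm_num

theorem nodeExp_pow (hn : 0 < n) (k : ℕ) : nodeExp n k ^ n = I * (-1) ^ k := by
  rw [nodeExp_eq_pow, ← pow_mul, mul_comm, pow_mul, nodeExp_zero_pow hn, pow_succ', pow_mul,
    I_sq]

theorem nodeExp_pow_two_mul (hn : 0 < n) (k : ℕ) : nodeExp n k ^ (2 * n) = -1 := by
  rw [mul_comm, pow_mul, nodeExp_pow hn, mul_pow, I_sq, ← pow_mul, mul_comm k 2, pow_mul,
    neg_one_sq, one_pow, neg_one_mul]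

theorem nodeExp_sub_one_ne_zero (hn : 0 < n) (k : ℕ) : nodeExp n k - 1 ≠ 0 := by
  intro h
  have := nodeExp_pow_two_mul hn k
  rw [sub_eq_zero.mp h, one_pow] at this
  norm_num at this

theorem isPrimitiveRoot_nodeExp_zero_sq (hn : 0 < n) :
    IsPrimitiveRoot (nodeExp n 0 ^ 2) (2 * n) := by
  convert Complex.isPrimitiveRoot_exp (2 * n) (by omega) using 1
  rw [nodeExp, ← Complex.exp_nat_mul, node]
  push_cast
  ring_nf

theorem sum_nodeExp_pow_of_not_dvd (hn : 0 < n) {t : ℕ} (ht : ¬ 2 * n ∣ t) :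
    ∑ k ∈ range (2 * n), nodeExp n k ^ t = 0 := by
  set ζ := nodeExp n 0 ^ 2
  have hζ := isPrimitiveRoot_nodeExp_zero_sq hn
  have hζt : ζ ^ t - 1 ≠ 0 := sub_ne_zero.mpr fun h => ht ((hζ.pow_eq_one_iff_dvd t).mp h)
  have hgeom : (∑ k ∈ range (2 * n), (ζ ^ t) ^ k) * (ζ ^ t - 1) = 0 := by
    rw [geom_sum_mul, ← pow_mul, mul_comm, pow_mul, hζ.pow_eq_one, one_pow, sub_self]
  have hterm : ∀ k, nodeExp n k ^ t = nodeExp n 0 ^ t * (ζ ^ t) ^ k := fun k => by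
    rw [nodeExp_eq_pow, ← pow_mul, ← pow_mul, ← pow_mul, ← pow_add]
    ring_nf
  rw [sum_congr rfl fun k _ => hterm k, ← mul_sum, (mul_eq_zero.mp hgeom).resolve_right hζt,
    mul_zero]

theorem sum_nodeExp_pow_div_sub_one (hn : 0 < n) {q : ℕ} (hq₁ : 1 ≤ q) (hq₂ : q ≤ 2 * n) :
    ∑ k ∈ range (2 * n), nodeExp n k ^ q / (nodeExp n k - 1) = n := by
  -- `1 / (u - 1) = -(1 / 2) ∑_{j < 2n} u ^ j`, and among the exponents `q + j` only `2n` is a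
  -- multiple of `2n`
  have hterm : ∀ k, nodeExp n k ^ q / (nodeExp n k - 1)
      = -(1 / 2) * ∑ j ∈ range (2 * n), nodeExp n k ^ (q + j) := fun k => by
    rw [div_eq_iff (nodeExp_sub_one_ne_zero hn k)]
    simp only [pow_add, ← mul_sum]
    have hgeom : (∑ j ∈ range (2 * n), nodeExp n k ^ j) * (nodeExp n k - 1) = -2 := by
      rw [geom_sum_mul, nodeExp_pow_two_mul hn]
      norm_num
    linear_combination (1 / 2 * nodeExp n k ^ q) * hgeom
  rw [sum_congr rfl fun k _ => hterm k, ← mul_sum, sum_comm,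
    sum_eq_single_of_mem (2 * n - q) (mem_range.mpr (by omega))]
  · simp only [show q + (2 * n - q) = 2 * n by omega, nodeExp_pow_two_mul hn, sum_const,
      card_range]
    ring
  · intro j hj hne
    refine sum_nodeExp_pow_of_not_dvd hn fun hdvd => hne ?_
    have := Nat.eq_of_dvd_of_lt_two_mul (by omega) hdvd (by rw [mem_range] at hj; omega)
    omega

theorem sum_nodeExp_pow_div_sub_one_sq (hn : 0 < n) {q : ℕ} (hq₁ : 1 ≤ q) (hq₂ : q ≤ 2 * n + 1) :
    ∑ k ∈ range (2 * n), nodeExp n k ^ q / (nodeExp n k - 1) ^ 2 = (n : ℂ) * (q - n - 1) := by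
  set f : ℕ → ℂ := fun q => ∑ k ∈ range (2 * n), nodeExp n k ^ q / (nodeExp n k - 1) ^ 2
  have hstep : ∀ q, 1 ≤ q → q ≤ 2 * n → f (q + 1) = f q + n := fun q h₁ h₂ => by
    rw [← sum_nodeExp_pow_div_sub_one hn h₁ h₂, ← sum_add_distrib]
    refine sum_congr rfl fun k _ => ?_
    have := nodeExp_sub_one_ne_zero hn k
    field_simp
    ring
  have hlinear : ∀ q, 1 ≤ q → q ≤ 2 * n + 1 → f q = f 1 + n * (q - 1) := by
    intro q hq
    induction q, hq using Nat.le_induction with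
    | base => simp
    | succ q hq ih =>
      intro h
      rw [hstep q hq (by omega), ih (by omega)]
      push_cast
      ring
  have hanti : f (2 * n + 1) = -f 1 := by
    simp only [f, ← sum_neg_distrib]
    refine sum_congr rfl fun k _ => ?_
    rw [pow_succ, nodeExp_pow_two_mul hn]
    ring
  have hf₁ : f 1 = -n ^ 2 := by
    have := hlinear (2 * n + 1) (by omega) le_rfl
    rw [hanti] at this
    push_cast at this
    linear_combination -this / 2
  change f q = _
  rw [hlinear q hq₁ hq₂, hf₁]
  ring

theorem sin_half_node_ne_zero (hn : 0 < n) (k : ℕ) : Real.sin (node n k / 2) ≠ 0 := by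
  intro h
  have := four_mul_sin_half_sq_mul_exp (node n k)
  have h' : Complex.sin (node n k / 2) = 0 := by exact_mod_cast h
  rw [h', ← nodeExp] at this
  exact nodeExp_sub_one_ne_zero hn k (pow_eq_zero_iff two_ne_zero |>.mp (by simpa using this))

theorem weight_eq (hn : 0 < n) (k : ℕ) :
    (weight n k : ℂ) = I * nodeExp n k ^ (n + 1) / (n * (nodeExp n k - 1) ^ 2) := by
  have hsin := four_mul_sin_half_sq_mul_exp (node n k)
  have hsin₀ : Complex.sin (node n k / 2) ≠ 0 := by
    exact_mod_cast sin_half_node_ne_zero hn k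
  have hn' : (n : ℂ) ≠ 0 := by exact_mod_cast hn.ne'
  rw [weight]
  push_cast
  rw [div_eq_div_iff (by simp [hn', hsin₀])
    (mul_ne_zero hn' (pow_ne_zero 2 (nodeExp_sub_one_ne_zero hn k)))]
  rw [← nodeExp] at hsin
  linear_combination (-I * n * nodeExp n k ^ n) * hsin
    + (I * n * (nodeExp n k - 1) ^ 2) * nodeExp_pow hn k
    + (n * (nodeExp n k - 1) ^ 2 * (-1) ^ k) * I_sq

theorem sum_weight_mul_exp (hn : 0 < n) {m : ℤ} (hm : |m| ≤ n) :
    ∑ k ∈ range (2 * n), (weight n k : ℂ) * cexp (m * node n k * I) = m * I := by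
  obtain ⟨hm₁, hm₂⟩ := abs_le.mp hm
  obtain ⟨q, rfl⟩ : ∃ q : ℕ, m = q - n - 1 := ⟨(m + n + 1).toNat, by omega⟩
  have hn' : (n : ℂ) ≠ 0 := by exact_mod_cast hn.ne'
  have hterm : ∀ k, (weight n k : ℂ) * cexp (↑(q - n - 1 : ℤ) * node n k * I)
      = I / n * (nodeExp n k ^ q / (nodeExp n k - 1) ^ 2) := fun k => by
    have hq : nodeExp n k ^ (n + 1) * cexp (↑(q - n - 1 : ℤ) * node n k * I) = nodeExp n k ^ q := by
      rw [nodeExp, ← Complex.exp_nat_mul, ← Complex.exp_nat_mul, ← Complex.exp_add]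
      push_cast
      ring_nf
    have := nodeExp_sub_one_ne_zero hn k
    rw [weight_eq hn, ← hq]
    field_simp
  rw [sum_congr rfl fun k _ => hterm k, ← mul_sum,
    sum_nodeExp_pow_div_sub_one_sq hn (by omega) (by omega)]
  push_cast
  field_simp

theorem sum_abs_weight (hn : 0 < n) : ∑ k ∈ range (2 * n), |weight n k| = n := by
  have habs : ∀ k, |weight n k| = (-1) ^ k * weight n k := fun k => by
    have hpos : 0 < 4 * n * Real.sin (node n k / 2) ^ 2 := by
      have := sin_half_node_ne_zero hn k
      positivity
    rw [weight, abs_div, abs_pow, abs_neg, abs_one, one_pow, abs_of_pos hpos, mul_div,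
      ← pow_add, ← two_mul, pow_mul, neg_one_sq, one_pow]
  have hexp : ∀ k, cexp (((n : ℤ) : ℂ) * node n k * I) = I * (-1) ^ k := fun k => by
    rw [← nodeExp_pow hn, nodeExp, ← Complex.exp_nat_mul]
    push_cast
    ring_nf
  have h : (∑ k ∈ range (2 * n), (-1) ^ k * (weight n k : ℂ)) * I = n * I := by
    rw [← Int.cast_natCast, ← sum_weight_mul_exp hn (by simp), sum_mul]
    exact sum_congr rfl fun k _ => by rw [hexp]; ring
  rw [sum_congr rfl fun k _ => habs k]
  exact_mod_cast mul_right_cancel₀ I_ne_zero h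

theorem deriv_trigPoly_eq_sum {ι : Type*} (s : Finset ι) (c : ι → ℂ) {ω : ι → ℤ} (hn : 0 < n)
    (hω : ∀ i ∈ s, |ω i| ≤ n) (θ : ℝ) :
    deriv (trigPoly s c ω) θ
      = ∑ k ∈ range (2 * n), (weight n k : ℂ) * trigPoly s c ω (θ + node n k) := by
  simp only [(hasDerivAt_trigPoly s c ω θ).deriv, trigPoly, mul_sum]
  rw [sum_comm]
  refine sum_congr rfl fun i hi => ?_
  have hsplit : ∀ k, (weight n k : ℂ) * (c i * cexp (ω i * ↑(θ + node n k) * I))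
      = c i * cexp (ω i * θ * I) * ((weight n k : ℂ) * cexp (ω i * node n k * I)) := fun k => by
    rw [ofReal_add, mul_add, add_mul, Complex.exp_add]
    ring
  rw [sum_congr rfl fun k _ => hsplit k, ← mul_sum, sum_weight_mul_exp hn (hω i hi)]
  ring

end RieszInterpolation

open RieszInterpolation in
theorem circleLpNorm_deriv_trigPoly_le {ι : Type*} (s : Finset ι) (c : ι → ℂ) {ω : ι → ℤ}
    {n : ℕ} (hω : ∀ i ∈ s, |ω i| ≤ n) {p : ℝ} (hp : 1 ≤ p) :
    circleLpNorm p (deriv (trigPoly s c ω)) ≤ n * circleLpNorm p (trigPoly s c ω) := by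
  rcases Nat.eq_zero_or_pos n with rfl | hn
  · have hconst : deriv (trigPoly s c ω) = 0 := funext fun θ => by
      rw [(hasDerivAt_trigPoly s c ω θ).deriv]
      refine sum_eq_zero fun i hi => ?_
      simp [abs_nonpos_iff.mp (by exact_mod_cast hω i hi)]
    rw [hconst, circleLpNorm_zero (by linarith), Nat.cast_zero, zero_mul]
  have hriesz : deriv (trigPoly s c ω)
      = ∑ k ∈ range (2 * n), fun θ => (weight n k : ℂ) * trigPoly s c ω (θ + node n k) :=
    funext fun θ => by rw [Finset.sum_apply, deriv_trigPoly_eq_sum s c hn hω]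
  calc circleLpNorm p (deriv (trigPoly s c ω))
      ≤ ∑ k ∈ range (2 * n),
          circleLpNorm p fun θ => (weight n k : ℂ) * trigPoly s c ω (θ + node n k) := by
        rw [hriesz]
        exact circleLpNorm_sum_le _ (fun k _ =>
          continuous_const.mul ((continuous_trigPoly s c ω).comp (continuous_add_const _))) hp
    _ = ∑ k ∈ range (2 * n), |weight n k| * circleLpNorm p (trigPoly s c ω) := by
        refine sum_congr rfl fun k _ => ?_
        rw [circleLpNorm_const_mul (by linarith), norm_real, Real.norm_eq_abs,
          circleLpNorm_comp_add_right (periodic_trigPoly s c ω)]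
    _ = n * circleLpNorm p (trigPoly s c ω) := by rw [← sum_mul, sum_abs_weight hn]

section Polynomial

variable {P : ℂ[X]} {n : ℕ}

theorem eval_exp_eq_trigPoly (hP : P.natDegree ≤ n) (θ : ℝ) :
    P.eval (cexp (I * θ)) = trigPoly (range (n + 1)) P.coeff (↑) θ := by
  rw [eval_eq_sum_range' (Nat.lt_succ_of_le hP), trigPoly]
  refine sum_congr rfl fun j _ => ?_
  rw [← Complex.exp_nat_mul]
  push_cast
  ring_nf

theorem exp_mul_eval_exp_eq_trigPoly (hP : P.natDegree ≤ n) (θ : ℝ) :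
    cexp (-(n * θ * I)) * P.eval (cexp (I * θ))
      = trigPoly (range (n + 1)) P.coeff (fun j => j - n) θ := by
  rw [eval_exp_eq_trigPoly hP, trigPoly, trigPoly, mul_sum]
  refine sum_congr rfl fun j _ => ?_
  rw [mul_left_comm, ← Complex.exp_add]
  push_cast
  ring_nf

variable (P) in
theorem hasDerivAt_eval_exp (θ : ℝ) :
    HasDerivAt (fun θ : ℝ => P.eval (cexp (I * θ)))
      (P.derivative.eval (cexp (I * θ)) * (I * cexp (I * θ))) θ := by
  have h : HasDerivAt (fun θ : ℝ => cexp (I * θ)) (I * cexp (I * θ)) θ := by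
    simpa [mul_comm] using ((hasDerivAt_id θ).ofReal_comp.const_mul I).cexp
  exact (P.hasDerivAt _).comp θ h

theorem circleLpNorm_derivative_eval_exp_le (hP : P.natDegree ≤ n) {p : ℝ} (hp : 1 ≤ p) :
    circleLpNorm p (fun θ => P.derivative.eval (cexp (I * θ)))
      ≤ n * circleLpNorm p (fun θ => P.eval (cexp (I * θ))) := by
  have hT : (fun θ : ℝ => P.eval (cexp (I * θ))) = trigPoly (range (n + 1)) P.coeff (↑) :=
    funext (eval_exp_eq_trigPoly hP)
  calc circleLpNorm p (fun θ => P.derivative.eval (cexp (I * θ)))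
      = circleLpNorm p (deriv fun θ : ℝ => P.eval (cexp (I * θ))) :=
        circleLpNorm_congr_norm fun θ => by
          rw [(hasDerivAt_eval_exp P θ).deriv, norm_mul, norm_mul, norm_I,
            norm_exp_I_mul_ofReal, one_mul, mul_one]
    _ ≤ n * circleLpNorm p (fun θ => P.eval (cexp (I * θ))) := by
        rw [hT]
        refine circleLpNorm_deriv_trigPoly_le _ _ (fun j hj => ?_) hp
        rw [Nat.abs_cast]
        exact_mod_cast Nat.lt_succ_iff.mp (mem_range.mp hj)

theorem circleLpNorm_sub_mul_derivative_eval_exp_le (hP : P.natDegree ≤ n) {p : ℝ}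
    (hp : 1 ≤ p) :
    circleLpNorm p (fun θ => n * P.eval (cexp (I * θ))
        - cexp (I * θ) * P.derivative.eval (cexp (I * θ)))
      ≤ n * circleLpNorm p (fun θ => P.eval (cexp (I * θ))) := by
  set G := fun θ : ℝ => cexp (-(n * θ * I)) * P.eval (cexp (I * θ))
  have hG : G = trigPoly (range (n + 1)) P.coeff (fun j => j - n) :=
    funext (exp_mul_eval_exp_eq_trigPoly hP)
  have hG' : ∀ θ : ℝ, HasDerivAt G (-I * cexp (-(n * θ * I)) * (n * P.eval (cexp (I * θ))
      - cexp (I * θ) * P.derivative.eval (cexp (I * θ)))) θ := fun θ => by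
    have h := (((hasDerivAt_id θ).ofReal_comp.const_mul (n : ℂ)).mul_const I).fun_neg.cexp
    simp only [id, ofReal_one, mul_one] at h
    exact (h.fun_mul (hasDerivAt_eval_exp P θ)).congr_deriv (by ring)
  have hnorm : ∀ θ : ℝ, ‖cexp (-(n * θ * I))‖ = 1 := fun θ => by
    rw [show -((n : ℂ) * θ * I) = ↑(-(n * θ)) * I by push_cast; ring, norm_exp_ofReal_mul_I]
  calc circleLpNorm p (fun θ => n * P.eval (cexp (I * θ))
        - cexp (I * θ) * P.derivative.eval (cexp (I * θ)))
      = circleLpNorm p (deriv G) := circleLpNorm_congr_norm fun θ => by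
        rw [(hG' θ).deriv, norm_mul, norm_mul, norm_neg, norm_I, hnorm, one_mul, one_mul]
    _ ≤ n * circleLpNorm p G := by
        rw [hG]
        refine circleLpNorm_deriv_trigPoly_le _ _ (fun j hj => ?_) hp
        have := mem_range.mp hj
        rw [abs_le]
        constructor <;> omega
    _ = n * circleLpNorm p (fun θ => P.eval (cexp (I * θ))) :=
        congrArg _ (circleLpNorm_congr_norm fun θ => by rw [norm_mul, hnorm θ, one_mul])

end Polynomial

theorem theorem1_polar_Lp_general (n : ℕ) (P : Polynomial ℂ)
    (hP : P.natDegree = n) (α : ℂ) (p : ℝ) (hp : 1 ≤ p) :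
    (∫ θ in (0:ℝ)..(2 * π),
        (‖(n : ℂ) * P.eval (Complex.exp (I * θ)) +
          (α - Complex.exp (I * θ)) * (derivative P).eval (Complex.exp (I * θ))‖) ^ p)
        ^ (1 / p)
      ≤ (n : ℝ) * (‖α‖ + 1) *
        (∫ θ in (0:ℝ)..(2 * π), (‖P.eval (Complex.exp (I * θ))‖) ^ p)
          ^ (1 / p) := by
  have hsplit : (fun θ : ℝ => (n : ℂ) * P.eval (cexp (I * θ))
        + (α - cexp (I * θ)) * P.derivative.eval (cexp (I * θ)))
      = (fun θ : ℝ => n * P.eval (cexp (I * θ)) - cexp (I * θ) * P.derivative.eval (cexp (I * θ)))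
        + fun θ : ℝ => α * P.derivative.eval (cexp (I * θ)) := by
    funext θ
    simp only [Pi.add_apply]
    ring
  change circleLpNorm p _ ≤ n * (‖α‖ + 1) * circleLpNorm p fun θ => P.eval (cexp (I * θ))
  rw [hsplit]
  calc _ ≤ _ + _ := circleLpNorm_add_le (by fun_prop) (by fun_prop) hp
    _ = _ + ‖α‖ * _ := by rw [circleLpNorm_const_mul (by linarith)]
    _ ≤ n * circleLpNorm p (fun θ => P.eval (cexp (I * θ)))
        + ‖α‖ * (n * circleLpNorm p fun θ => P.eval (cexp (I * θ))) := by
      gcongr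
      exacts [circleLpNorm_sub_mul_derivative_eval_exp_le hP.le hp,
        circleLpNorm_derivative_eval_exp_le hP.le hp]
    _ = n * (‖α‖ + 1) * circleLpNorm p fun θ => P.eval (cexp (I * θ)) := by ring

theorem theorem1_polar_Lp (n : ℕ) (hn : 1 ≤ n) (P : Polynomial ℂ)
    (hP : P.natDegree = n) (α : ℂ) (p : ℝ) (hp : 1 ≤ p) :
    (∫ θ in (0:ℝ)..(2 * π),
        (‖(n : ℂ) * P.eval (Complex.exp (I * θ)) +
          (α - Complex.exp (I * θ)) * (derivative P).eval (Complex.exp (I * θ))‖) ^ p)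
        ^ (1 / p)
      ≤ (n : ℝ) * (‖α‖ + 1) *
        (∫ θ in (0:ℝ)..(2 * π), (‖P.eval (Complex.exp (I * θ))‖) ^ p)
          ^ (1 / p) :=
  theorem1_polar_Lp_general n P hP α p hp
end
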